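/- BH key lemma (leave-one-out bound): for the BH procedure at level α applied to p-values p₁,…,p_m, if p_j is super-uniform and independent of (p_i)_{i≠j}, then E[ 𝟙{j ∈ S} / max(1, R) ] ≤ α/m, where S is the BH rejection set and R = |S|. -/

import Mathlib

open MeasureTheory ProbabilityTheory
open scoped Classical

/-- The number of rejections `k = max {r : p_(r) ≤ α r / m}` of the Benjamini–Hochberg
procedure at level `α`, expressed via the standard equivalence
`p_(r) ≤ t ↔ #{j : p j ≤ t} ≥ r` (with `k = 0` when no such `r` exists). -/
noncomputable def bhK (α : ℝ) (m : ℕ) (p : Fin m → ℝ) : ℕ :=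
  sSup {r : ℕ | r ≤ m ∧ r ≤ (Finset.univ.filter fun j => p j ≤ α * r / m).card}

/-- The Benjamini–Hochberg rejection set `S = {j : p j ≤ α k / m}` at level `α`. -/
noncomputable def bhReject (α : ℝ) (m : ℕ) (p : Fin m → ℝ) : Finset (Fin m) :=
  Finset.univ.filter fun j => p j ≤ α * (bhK α m p) / m

/-!
Let `K` be the BH count computed with `p j` replaced by `0`. It is a function of the other
p-values, hence independent of `p j`, and `1 ≤ K ≤ m`. Lowering one p-value can only raise the
count, and once `p j ≤ α K / m` it is counted at level `K` anyway; so `j ∈ S ↔ p j ≤ α K / m`, and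
then `R = K`. The integrand is therefore `𝟙{p j ≤ α K / m} / K`. On the slice `K = r`,
independence and super-uniformity bound its integral by `(α r / m) · P(K = r) / r`, and these
sum to at most `α / m`.
-/

open Finset Function

section BenjaminiHochberg

variable {α : ℝ} {m : ℕ}

lemma bddAbove_bhK_set (α : ℝ) (m : ℕ) (x : Fin m → ℝ) :
    BddAbove {r : ℕ | r ≤ m ∧ r ≤ #{i | x i ≤ α * r / m}} :=
  ⟨m, fun _ hr => hr.1⟩

lemma bhK_le_and_le_card (α : ℝ) (m : ℕ) (x : Fin m → ℝ) :
    bhK α m x ≤ m ∧ bhK α m x ≤ #{i | x i ≤ α * bhK α m x / m} :=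
  Nat.sSup_mem ⟨0, by simp⟩ (bddAbove_bhK_set α m x)

lemma le_bhK {x : Fin m → ℝ} {r : ℕ} (hrm : r ≤ m) (hr : r ≤ #{i | x i ≤ α * r / m}) :
    r ≤ bhK α m x :=
  le_csSup (bddAbove_bhK_set α m x) ⟨hrm, hr⟩

lemma le_bhK_iff {x : Fin m → ℝ} {r : ℕ} :
    r ≤ bhK α m x ↔ ∃ s, r ≤ s ∧ s ≤ m ∧ s ≤ #{i | x i ≤ α * s / m} :=
  ⟨fun h => ⟨_, h, bhK_le_and_le_card α m x⟩, fun ⟨_, hrs, hsm, hs⟩ => hrs.trans (le_bhK hsm hs)⟩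

lemma card_bhReject (hα : 0 ≤ α) (x : Fin m → ℝ) : #(bhReject α m x) = bhK α m x := by
  obtain ⟨hkm, hk⟩ := bhK_le_and_le_card α m x
  refine le_antisymm (le_bhK ((card_filter_le _ _).trans (by simp)) ?_) hk
  refine card_le_card (monotone_filter_right _ fun i _ hi => hi.trans ?_)
  gcongr
  exact_mod_cast hk

lemma bhK_le_bhK_update_zero (hα : 0 ≤ α) (x : Fin m → ℝ) (j : Fin m) :
    bhK α m x ≤ bhK α m (update x j 0) := by
  obtain ⟨hkm, hk⟩ := bhK_le_and_le_card α m x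
  refine le_bhK hkm (hk.trans (card_le_card (monotone_filter_right _ fun i _ hi => ?_)))
  rcases eq_or_ne i j with rfl | hij
  · simp only [update_self]
    positivity
  · rwa [update_of_ne hij]

lemma one_le_bhK_update_zero (hα : 0 ≤ α) (x : Fin m → ℝ) (j : Fin m) :
    1 ≤ bhK α m (update x j 0) :=
  le_bhK j.pos <| one_le_card.2
    ⟨j, by simp only [mem_filter, mem_univ, update_self, true_and]; positivity⟩

lemma bhK_eq_bhK_update_zero (hα : 0 ≤ α) {x : Fin m → ℝ} {j : Fin m}
    (hj : x j ≤ α * bhK α m (update x j 0) / m) : bhK α m x = bhK α m (update x j 0) := by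
  obtain ⟨hkm, hk⟩ := bhK_le_and_le_card α m (update x j 0)
  refine le_antisymm (bhK_le_bhK_update_zero hα x j)
    (le_bhK hkm (hk.trans (card_le_card (monotone_filter_right _ fun i _ hi => ?_))))
  rcases eq_or_ne i j with rfl | hij
  · exact hj
  · rwa [update_of_ne hij] at hi

lemma mem_bhReject_iff (hα : 0 ≤ α) {x : Fin m → ℝ} {j : Fin m} :
    j ∈ bhReject α m x ↔ x j ≤ α * bhK α m (update x j 0) / m := by
  simp only [bhReject, mem_filter, mem_univ, true_and]
  refine ⟨fun h => h.trans ?_, fun h => (bhK_eq_bhK_update_zero hα h).symm ▸ h⟩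
  gcongr
  exact_mod_cast bhK_le_bhK_update_zero hα x j

lemma ite_mem_bhReject_div_card (hα : 0 ≤ α) (x : Fin m → ℝ) (j : Fin m) :
    (if j ∈ bhReject α m x then (1 : ℝ) else 0) / ((max 1 #(bhReject α m x) : ℕ) : ℝ) =
      (if x j ≤ α / m * bhK α m (update x j 0) then 1 else 0) / bhK α m (update x j 0) := by
  simp_rw [div_mul_eq_mul_div, ← mem_bhReject_iff hα]
  split_ifs with h
  · rw [card_bhReject hα, bhK_eq_bhK_update_zero hα ((mem_bhReject_iff hα).1 h),
      max_eq_right (one_le_bhK_update_zero hα x j)]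
  · simp

lemma measurable_card_filter_le (t : ℝ) : Measurable fun x : Fin m → ℝ => #{i | x i ≤ t} := by
  simp only [card_filter]
  exact Finset.measurable_sum _ fun i _ =>
    Measurable.ite (measurableSet_le (measurable_pi_apply i) measurable_const)
      measurable_const measurable_const

lemma measurable_bhK (α : ℝ) (m : ℕ) : Measurable (bhK α m) := by
  refine measurable_of_Ici fun r => ?_
  have h : bhK α m ⁻¹' Set.Ici r =
      ⋃ s, {x | r ≤ s ∧ s ≤ m ∧ s ≤ #{i | x i ≤ α * s / m}} := by
    ext x
    simp [le_bhK_iff]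
  rw [h]
  exact MeasurableSet.iUnion fun s => measurableSet_setOfPred.2 <|
    measurable_const.and <| measurable_const.and <|
      measurableSet_setOfPred.1 (measurable_card_filter_le _ measurableSet_Ici)

end BenjaminiHochberg

section SuperUniform

open MeasureTheory ProbabilityTheory

variable {Ω : Type*} [MeasurableSpace Ω]

def SuperUniform (μ : Measure Ω) (X : Ω → ℝ) : Prop :=
  ∀ t ∈ Set.Icc (0 : ℝ) 1, μ {ω | X ω ≤ t} ≤ ENNReal.ofReal t

variable {μ : Measure Ω} [IsProbabilityMeasure μ] {X : Ω → ℝ}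

lemma SuperUniform.measureReal_le (hX : SuperUniform μ X) {t : ℝ} (ht : 0 ≤ t) :
    μ.real {ω | X ω ≤ t} ≤ t := by
  rcases le_or_gt t 1 with ht1 | ht1
  · exact ENNReal.toReal_le_of_le_ofReal ht (hX t ⟨ht, ht1⟩)
  · exact measureReal_le_one.trans ht1.le

theorem SuperUniform.integral_ite_div_le (hX : SuperUniform μ X) {K : Ω → ℕ} {n : ℕ} {c : ℝ}
    (hXm : Measurable X) (hKm : Measurable K) (hind : IndepFun X K μ) (hKn : ∀ ω, K ω ≤ n)
    (hc : 0 ≤ c) :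
    ∫ ω, (if X ω ≤ c * K ω then (1 : ℝ) else 0) / K ω ∂μ ≤ c := by
  set A : ℕ → Set Ω := fun r => X ⁻¹' Set.Iic (c * r)
  set B : ℕ → Set Ω := fun r => K ⁻¹' {r}
  have hA : ∀ r, MeasurableSet (A r) := fun r => hXm measurableSet_Iic
  have hB : ∀ r, MeasurableSet (B r) := fun r => hKm (measurableSet_singleton r)
  have hsplit : (fun ω => (if X ω ≤ c * K ω then (1 : ℝ) else 0) / K ω) =
      fun ω => ∑ r ∈ range (n + 1), (A r ∩ B r).indicator (fun _ => (r : ℝ)⁻¹) ω := by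
    funext ω
    rw [sum_eq_single_of_mem (K ω) (mem_range.2 (Nat.lt_succ_of_le (hKn ω)))
      fun r _ hr => Set.indicator_of_notMem (fun h => hr h.2.symm) _]
    by_cases h : X ω ≤ c * K ω <;> simp [A, B, h]
  have hterm : ∀ r, μ.real (A r) / r ≤ c := by
    rintro (_ | r)
    · simp [hc]
    · exact div_le_of_le_mul₀ (by positivity) hc (hX.measureReal_le (by positivity))
  calc ∫ ω, (if X ω ≤ c * K ω then (1 : ℝ) else 0) / K ω ∂μ
      = ∑ r ∈ range (n + 1), μ.real (A r) / r * μ.real (B r) := by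
        rw [hsplit, integral_finsetSum _
          fun r _ => (integrable_const _).indicator ((hA r).inter (hB r))]
        refine sum_congr rfl fun r _ => ?_
        rw [integral_indicator_const _ ((hA r).inter (hB r)), smul_eq_mul, measureReal_def,
          hind.measure_inter_preimage_eq_mul _ _ measurableSet_Iic (measurableSet_singleton r),
          ENNReal.toReal_mul, ← measureReal_def, ← measureReal_def]
        ring
    _ ≤ ∑ r ∈ range (n + 1), c * μ.real (B r) :=
        sum_le_sum fun r _ => mul_le_mul_of_nonneg_right (hterm r) measureReal_nonneg
    _ = c * μ.real (K ⁻¹' range (n + 1)) := by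
        rw [← mul_sum, sum_measureReal_preimage_singleton _ fun r _ => hB r]
    _ ≤ c := mul_le_of_le_one_right hc measureReal_le_one

end SuperUniform

theorem stmt13_general {Ω : Type*} [MeasurableSpace Ω] (μ : Measure Ω) [IsProbabilityMeasure μ]
    (m : ℕ) (α : ℝ) (hα0 : 0 ≤ α)
    (p : Fin m → Ω → ℝ) (hmeas : ∀ i, Measurable (p i))
    (j : Fin m)
    (hsup : ∀ t ∈ Set.Icc (0 : ℝ) 1, μ {ω | p j ω ≤ t} ≤ ENNReal.ofReal t)
    (hindep : IndepFun (p j)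
      (fun ω => fun i : {i : Fin m // i ≠ j} => p (i : Fin m) ω) μ) :
    (∫ ω, ((if j ∈ bhReject α m (fun i => p i ω) then (1 : ℝ) else 0) /
        ((max 1 (bhReject α m (fun i => p i ω)).card : ℕ) : ℝ)) ∂μ) ≤ α / m := by
  set g : ({i : Fin m // i ≠ j} → ℝ) → ℕ :=
    fun y => bhK α m fun i => if h : i = j then 0 else y ⟨i, h⟩
  set K : Ω → ℕ := fun ω => bhK α m (update (fun i => p i ω) j 0)
  have hKg : K = g ∘ fun ω i => p i ω := by
    funext ω
    refine congrArg (bhK α m) (funext fun i => ?_)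
    rcases eq_or_ne i j with rfl | hij <;> simp [update, *]
  have hg : Measurable g := (measurable_bhK α m).comp <| measurable_pi_lambda _ fun i => by
    rcases eq_or_ne i j with rfl | hij
    · simp
    · simpa [hij] using measurable_pi_apply _
  have hKm : Measurable K := hKg ▸ hg.comp (measurable_pi_lambda _ fun i => hmeas i)
  have hind : IndepFun (p j) K μ := hKg ▸ hindep.comp measurable_id hg
  simp_rw [ite_mem_bhReject_div_card hα0]
  exact SuperUniform.integral_ite_div_le (μ := μ) hsup (hmeas j) hKm hind
    (fun ω => (bhK_le_and_le_card α m _).1) (by positivity)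

/-- BH leave-one-out key lemma: for the BH procedure at level `α`, if `p j` is
super-uniform and independent of the remaining p-values, then
`E[𝟙{j ∈ S} / max(1, R)] ≤ α / m`. -/
theorem stmt13 {Ω : Type*} [MeasurableSpace Ω] (μ : Measure Ω) [IsProbabilityMeasure μ]
    (m : ℕ) (hm : 0 < m) (α : ℝ) (hα0 : 0 ≤ α) (hα1 : α ≤ 1)
    (p : Fin m → Ω → ℝ) (hmeas : ∀ i, Measurable (p i))
    (hrange : ∀ i ω, p i ω ∈ Set.Icc (0 : ℝ) 1)
    (j : Fin m)
    (hsup : ∀ t ∈ Set.Icc (0 : ℝ) 1, μ {ω | p j ω ≤ t} ≤ ENNReal.ofReal t)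
    (hindep : IndepFun (p j)
      (fun ω => fun i : {i : Fin m // i ≠ j} => p (i : Fin m) ω) μ) :
    (∫ ω, ((if j ∈ bhReject α m (fun i => p i ω) then (1 : ℝ) else 0) /
        ((max 1 (bhReject α m (fun i => p i ω)).card : ℕ) : ℝ)) ∂μ) ≤ α / m :=
  stmt13_general μ m α hα0 p hmeas j hsup hindep
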